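/- For every integer m ≥ 3 there is a constant C_m > 0 with the following property. Let n ≥ m, set m₀ = ⌊m/2⌋ + 1 and n₀ = ⌊√n⌋, and suppose L > 0 is a real number such that for all integers m' with m₀ ≤ m' ≤ m and all integers n' with n₀ ≤ n' ≤ n, the Ramsey numbers satisfy r(m₀, n') ≤ (1/L)·binom(m₀ + n' − 2, m₀ − 1) and r(m', n₀) ≤ (1/L)·binom(m' + n₀ − 2, m' − 1). Then the online Ramsey number satisfies r̃(m,n) ≤ (C_m · n / L) · binom(m + n − 2, m − 1). -/

import Mathlib

open scoped Classical

namespace OnlineRamseyGame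

/-- A valid Builder strategy: it never builds a loop, and along any play the
edges built are pairwise distinct. -/
def ValidBuilder {V : Type*} (B : List Bool → Sym2 V) : Prop :=
  (∀ h : List Bool, ¬ (B h).IsDiag) ∧
  ∀ h : List Bool, ∀ i : ℕ, i < h.length → B (h.take i) ≠ B h

/-- The history of Painter's colors after `t` turns against Painter strategy `P`
(Builder's moves are determined by this history). -/
def histOf (P : List Bool → Bool) : ℕ → List Bool
  | 0 => []
  | t + 1 => histOf P t ++ [P (histOf P t)]

/-- The graph built by `edge` contains a monochromatic clique on `k` vertices in
color `col` within the first `N` turns. -/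
def HasMonoClique {V : Type*} (edge : ℕ → Sym2 V) (color : ℕ → Bool)
    (N k : ℕ) (col : Bool) : Prop :=
  ∃ S : Finset V, S.card = k ∧
    ∀ u ∈ S, ∀ v ∈ S, u ≠ v → ∃ t, t < N ∧ edge t = s(u, v) ∧ color t = col

/-- Builder has a valid strategy winning the `(m,n)` online Ramsey game within `N`
turns against every Painter strategy (red = `true`, blue = `false`). -/
def BuilderWins (m n N : ℕ) : Prop :=
  ∃ B : List Bool → Sym2 ℕ, ValidBuilder B ∧
    ∀ P : List Bool → Bool,
      HasMonoClique (fun t => B (histOf P t)) (fun t => P (histOf P t)) N m true ∨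
      HasMonoClique (fun t => B (histOf P t)) (fun t => P (histOf P t)) N n false

/-- The online Ramsey number `r̃(m,n)`: the least `N` such that Builder can
guarantee a win within `N` turns. -/
noncomputable def onlineRamsey (m n : ℕ) : ℕ := sInf {N | BuilderWins m n N}

/-- The classical Ramsey number `r(m,n)`: the least `N` such that every red/blue
coloring of the edges of `K_N` contains a red `K_m` or a blue `K_n`
(red = `true`, blue = `false`). -/
noncomputable def ramsey (m n : ℕ) : ℕ :=
  sInf {N | ∀ χ : Sym2 (Fin N) → Bool, ∃ S : Finset (Fin N),
    (S.card = m ∧ ∀ u ∈ S, ∀ v ∈ S, u ≠ v → χ s(u, v) = true) ∨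
    (S.card = n ∧ ∀ u ∈ S, ∀ v ∈ S, u ≠ v → χ s(u, v) = false)}

def RSet (m n : ℕ) : Set ℕ :=
  {N | ∀ χ : Sym2 (Fin N) → Bool, ∃ S : Finset (Fin N),
    (S.card = m ∧ ∀ u ∈ S, ∀ v ∈ S, u ≠ v → χ s(u, v) = true) ∨
    (S.card = n ∧ ∀ u ∈ S, ∀ v ∈ S, u ≠ v → χ s(u, v) = false)}

lemma ramsey_def (m n : ℕ) : ramsey m n = sInf (RSet m n) := rfl

private lemma lift_pairs {α β : Type*} [DecidableEq β] (g : α → β) (χ : Sym2 β → Bool) (c : Bool)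
    (S : Finset α)
    (h : ∀ u ∈ S, ∀ v ∈ S, u ≠ v → χ (Sym2.map g s(u, v)) = c) :
    ∀ u ∈ S.image g, ∀ v ∈ S.image g, u ≠ v → χ s(u, v) = c := by
  intro u hu v hv huv
  obtain ⟨x, hx, rfl⟩ := Finset.mem_image.1 hu
  obtain ⟨y, hy, rfl⟩ := Finset.mem_image.1 hv
  have hxy : x ≠ y := by rintro rfl; exact huv rfl
  have := h x hx y hy hxy
  rwa [Sym2.map_pair_eq] at this

lemma core : ∀ (k p q : ℕ) (T : Finset ℕ) (χ : Sym2 ℕ → Bool), p + q ≤ k →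
    (p + q).choose p ≤ T.card →
    (∃ S, S ⊆ T ∧ S.card = p + 1 ∧ ∀ u ∈ S, ∀ v ∈ S, u ≠ v → χ s(u, v) = true) ∨
    (∃ S, S ⊆ T ∧ S.card = q + 1 ∧ ∀ u ∈ S, ∀ v ∈ S, u ≠ v → χ s(u, v) = false) := by
  intro k
  induction k with
  | zero =>
    intro p q T χ hpq hT
    obtain rfl : p = 0 := by omega
    obtain rfl : q = 0 := by omega
    obtain ⟨x, hx⟩ : T.Nonempty := Finset.card_pos.1 (by simpa using hT)
    exact Or.inl ⟨{x}, Finset.singleton_subset_iff.2 hx, Finset.card_singleton x, by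
      intro u hu v hv huv
      simp only [Finset.mem_singleton] at hu hv
      subst hu; subst hv; exact absurd rfl huv⟩
  | succ k ih =>
    intro p q T χ hpq hT
    match p, q with
    | 0, q =>
      obtain ⟨x, hx⟩ : T.Nonempty := Finset.card_pos.1
        (lt_of_lt_of_le (Nat.choose_pos (by omega)) hT)
      exact Or.inl ⟨{x}, Finset.singleton_subset_iff.2 hx, Finset.card_singleton x, by
        intro u hu v hv huv
        simp only [Finset.mem_singleton] at hu hv
        subst hu; subst hv; exact absurd rfl huv⟩
    | p + 1, 0 =>
      obtain ⟨x, hx⟩ : T.Nonempty := Finset.card_pos.1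
        (lt_of_lt_of_le (Nat.choose_pos (by omega)) hT)
      exact Or.inr ⟨{x}, Finset.singleton_subset_iff.2 hx, Finset.card_singleton x, by
        intro u hu v hv huv
        simp only [Finset.mem_singleton] at hu hv
        subst hu; subst hv; exact absurd rfl huv⟩
    | p + 1, q + 1 =>
      have hTne : T.Nonempty := Finset.card_pos.1
        (lt_of_lt_of_le (Nat.choose_pos (by omega)) hT)
      set v := T.min' hTne with hv
      have hvT : v ∈ T := T.min'_mem hTne
      set R := (T.erase v).filter (fun x => χ s(v, x) = true) with hRdef
      set Bl := (T.erase v).filter (fun x => ¬ (χ s(v, x) = true)) with hBldef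
      have hsum : R.card + Bl.card = T.card - 1 := by
        rw [hRdef, hBldef, Finset.card_filter_add_card_filter_not,
          Finset.card_erase_of_mem hvT]
      have hpas : ((p+1) + (q+1)).choose (p+1)
          = (p + (q+1)).choose p + ((p+1) + q).choose (p+1) := by
        have h := Nat.choose_succ_succ (p+q+1) p
        have e1 : (p+1)+(q+1) = (p+q+1)+1 := by omega
        have e2 : p+(q+1) = p+q+1 := by omega
        have e3 : (p+1)+q = p+q+1 := by omega
        rw [e1, e2, e3]
        exact h
      have hRsubT : ∀ x ∈ R, x ∈ T := fun x hx =>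
        Finset.mem_of_mem_erase (Finset.mem_filter.1 hx).1
      have hBlsubT : ∀ x ∈ Bl, x ∈ T := fun x hx =>
        Finset.mem_of_mem_erase (Finset.mem_filter.1 hx).1
      by_cases hRc : (p + (q+1)).choose p ≤ R.card
      · rcases ih p (q+1) R χ (by omega) hRc with ⟨S, hs, hc, hp⟩ | ⟨S, hs, hc, hp⟩
        · left
          have hvS : v ∉ S := fun hmem =>
            (Finset.mem_erase.1 (Finset.mem_filter.1 (hs hmem)).1).1 rfl
          refine ⟨insert v S, ?_, ?_, ?_⟩
          · intro x hx
            rcases Finset.mem_insert.1 hx with rfl | hx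
            · exact hvT
            · exact hRsubT x (hs hx)
          · rw [Finset.card_insert_of_notMem hvS, hc]
          · intro x hx y hy hxy
            rcases Finset.mem_insert.1 hx with rfl | hx <;>
              rcases Finset.mem_insert.1 hy with rfl | hy
            · exact absurd rfl hxy
            · exact (Finset.mem_filter.1 (hs hy)).2
            · have hx' := (Finset.mem_filter.1 (hs hx)).2
              rwa [Sym2.eq_swap] at hx'
            · exact hp x hx y hy hxy
        · right
          exact ⟨S, fun x hx => hRsubT x (hs hx), hc, hp⟩
      · have hBc : ((p+1) + q).choose (p+1) ≤ Bl.card := by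
          have h1 := hT
          rw [hpas] at h1
          omega
        rcases ih (p+1) q Bl χ (by omega) hBc with ⟨S, hs, hc, hp⟩ | ⟨S, hs, hc, hp⟩
        · left
          exact ⟨S, fun x hx => hBlsubT x (hs hx), hc, hp⟩
        · right
          have hvS : v ∉ S := fun hmem =>
            (Finset.mem_erase.1 (Finset.mem_filter.1 (hs hmem)).1).1 rfl
          refine ⟨insert v S, ?_, ?_, ?_⟩
          · intro x hx
            rcases Finset.mem_insert.1 hx with rfl | hx
            · exact hvT
            · exact hBlsubT x (hs hx)
          · rw [Finset.card_insert_of_notMem hvS, hc]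
          · intro x hx y hy hxy
            rcases Finset.mem_insert.1 hx with rfl | hx <;>
              rcases Finset.mem_insert.1 hy with rfl | hy
            · exact absurd rfl hxy
            · exact (Bool.not_eq_true _).mp (Finset.mem_filter.1 (hs hy)).2
            · have hx' : χ s(v, x) = false := by
                have h2 := (Finset.mem_filter.1 (hs hx)).2
                exact (Bool.not_eq_true _).mp h2
              rwa [Sym2.eq_swap] at hx'
            · exact hp x hx y hy hxy
      

-- §2
lemma choose_mem_RSet (p q : ℕ) : ((p + q).choose p) ∈ RSet (p + 1) (q + 1) := by
  have hN : 0 < (p + q).choose p := Nat.choose_pos (Nat.le_add_right p q)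
  intro χ
  let ι : ℕ → Fin ((p + q).choose p) := fun x => ⟨x % (p + q).choose p, Nat.mod_lt x hN⟩
  have hι : ∀ x ∈ Finset.range ((p + q).choose p), ∀ y ∈ Finset.range ((p + q).choose p),
      ι x = ι y → x = y := by
    intro x hx y hy hxy
    have hx' := Finset.mem_range.1 hx
    have hy' := Finset.mem_range.1 hy
    have h2 := congrArg Fin.val hxy
    simp only [ι] at h2
    rwa [Nat.mod_eq_of_lt hx', Nat.mod_eq_of_lt hy'] at h2
  have hcore := core (p + q) p q (Finset.range ((p + q).choose p))
    (fun e => χ (e.map ι)) le_rfl (by simp)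
  rcases hcore with ⟨S, hs, hc, hp⟩ | ⟨S, hs, hc, hp⟩
  · refine ⟨S.image ι, Or.inl ⟨?_, ?_⟩⟩
    swap
    · exact lift_pairs ι χ true S hp
    rw [Finset.card_image_of_injOn (fun x hx y hy => hι x (hs hx) y (hs hy)), hc]
  · refine ⟨S.image ι, Or.inr ⟨?_, lift_pairs ι χ false S hp⟩⟩
    rw [Finset.card_image_of_injOn (fun x hx y hy => hι x (hs hx) y (hs hy)), hc]

lemma RSet_nonempty (a b : ℕ) : (RSet a b).Nonempty := by
  match a, b with
  | 0, b => exact ⟨0, fun χ => ⟨∅, Or.inl ⟨Finset.card_empty, by simp⟩⟩⟩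
  | a + 1, 0 => exact ⟨0, fun χ => ⟨∅, Or.inr ⟨Finset.card_empty, by simp⟩⟩⟩
  | a + 1, b + 1 => exact ⟨_, choose_mem_RSet a b⟩

lemma ramsey_mem (a b : ℕ) : ramsey a b ∈ RSet a b := by
  rw [ramsey_def]; exact Nat.sInf_mem (RSet_nonempty a b)

lemma ramsey_le_choose (p q : ℕ) : ramsey (p + 1) (q + 1) ≤ (p + q).choose p := by
  rw [ramsey_def]; exact Nat.sInf_le (choose_mem_RSet p q)

lemma ramsey_pos (a b : ℕ) (ha : 1 ≤ a) (hb : 1 ≤ b) : 1 ≤ ramsey a b := by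
  by_contra h
  push_neg at h
  interval_cases h' : ramsey a b
  · have hmem := ramsey_mem a b
    rw [h'] at hmem
    obtain ⟨S, hS⟩ := hmem (fun _ => true)
    have hS0 : S.card = 0 := by
      have := Finset.card_le_card (Finset.subset_univ S)
      simpa using this
    rcases hS with ⟨h1, _⟩ | ⟨h1, _⟩ <;> omega

lemma ramseyF {a b : ℕ} (F : Finset ℕ) (hF : F.card = ramsey a b) (χ : Sym2 ℕ → Bool) :
    (∃ S, S ⊆ F ∧ S.card = a ∧ ∀ u ∈ S, ∀ v ∈ S, u ≠ v → χ s(u, v) = true) ∨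
    (∃ S, S ⊆ F ∧ S.card = b ∧ ∀ u ∈ S, ∀ v ∈ S, u ≠ v → χ s(u, v) = false) := by
  have hmem := ramsey_mem a b
  set r := ramsey a b with hr
  let g : Fin r → ℕ := fun i => ((F.orderIsoOfFin hF) i : ℕ)
  have hgF : ∀ i, g i ∈ F := fun i => ((F.orderIsoOfFin hF) i).2
  have hginj : ∀ x ∈ (Finset.univ : Finset (Fin r)), ∀ y ∈ Finset.univ, g x = g y → x = y :=
    fun x _ y _ hxy => (F.orderIsoOfFin hF).injective (Subtype.ext hxy)
  obtain ⟨S, hS⟩ := hmem (fun e => χ (e.map g))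
  rcases hS with ⟨hc, hp⟩ | ⟨hc, hp⟩
  · refine Or.inl ⟨S.image g, ?_, ?_, lift_pairs g χ true S hp⟩
    · intro x hx
      obtain ⟨i, _, rfl⟩ := Finset.mem_image.1 hx
      exact hgF i
    · rw [Finset.card_image_of_injOn
        (fun x hx y hy => hginj x (Finset.mem_univ x) y (Finset.mem_univ y)), hc]
  · refine Or.inr ⟨S.image g, ?_, ?_, lift_pairs g χ false S hp⟩
    · intro x hx
      obtain ⟨i, _, rfl⟩ := Finset.mem_image.1 hx
      exact hgF i
    · rw [Finset.card_image_of_injOn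
        (fun x hx y hy => hginj x (Finset.mem_univ x) y (Finset.mem_univ y)), hc]

/-! ### Lists of all pairs -/

def allPairs : List ℕ → List (Sym2 ℕ)
  | [] => []
  | x :: xs => (xs.map fun y => s(x, y)) ++ allPairs xs

lemma allPairs_length : ∀ l : List ℕ, (allPairs l).length ≤ l.length * l.length := by
  intro l
  induction l with
  | nil => simp [allPairs]
  | cons x xs ih =>
    simp only [allPairs, List.length_append, List.length_map, List.length_cons]
    have : (xs.length + 1) * (xs.length + 1) = xs.length * xs.length + 2 * xs.length + 1 := by ring
    omega

lemma allPairs_endpoints : ∀ l : List ℕ, ∀ e ∈ allPairs l, ∀ z ∈ e, z ∈ l := by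
  intro l
  induction l with
  | nil => simp [allPairs]
  | cons x xs ih =>
    intro e he z hz
    rcases List.mem_append.1 he with he | he
    · obtain ⟨y, hy, rfl⟩ := List.mem_map.1 he
      rcases Sym2.mem_iff.1 hz with rfl | rfl
      · exact List.mem_cons_self
      · exact List.mem_cons_of_mem _ hy
    · exact List.mem_cons_of_mem _ (ih e he z hz)

lemma allPairs_not_isDiag : ∀ l : List ℕ, l.Nodup → ∀ e ∈ allPairs l, ¬ e.IsDiag := by
  intro l
  induction l with
  | nil => simp [allPairs]
  | cons x xs ih =>
    intro hnd e he
    rcases List.mem_append.1 he with he | he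
    · obtain ⟨y, hy, rfl⟩ := List.mem_map.1 he
      rw [Sym2.mk_isDiag_iff]
      rintro rfl
      exact (List.nodup_cons.1 hnd).1 hy
    · exact ih (List.nodup_cons.1 hnd).2 e he

lemma allPairs_nodup : ∀ l : List ℕ, l.Nodup → (allPairs l).Nodup := by
  intro l
  induction l with
  | nil => simp [allPairs]
  | cons x xs ih =>
    intro hnd
    have hx : x ∉ xs := (List.nodup_cons.1 hnd).1
    have hxs : xs.Nodup := (List.nodup_cons.1 hnd).2
    show ((xs.map fun y => s(x, y)) ++ allPairs xs).Nodup
    rw [List.nodup_append]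
    refine ⟨?_, ih hxs, ?_⟩
    · refine List.Nodup.map_on ?_ hxs
      intro y hy z hz hyz
      rcases Sym2.eq_iff.1 hyz with ⟨-, h⟩ | ⟨h1, h2⟩
      · exact h
      · exact h2.trans h1
    · intro e he1 e2 he2 heq
      subst heq
      obtain ⟨y, hy, rfl⟩ := List.mem_map.1 he1
      have hmem := allPairs_endpoints xs s(x, y) he2 x (Sym2.mem_mk_left x y)
      exact hx hmem

lemma allPairs_complete : ∀ l : List ℕ, ∀ x y : ℕ, x ∈ l → y ∈ l → x ≠ y →
    s(x, y) ∈ allPairs l := by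
  intro l
  induction l with
  | nil => simp
  | cons z zs ih =>
    intro x y hx hy hxy
    rcases List.mem_cons.1 hx with hxz | hx'
    · subst hxz
      have hy' : y ∈ zs := by
        rcases List.mem_cons.1 hy with hyz | hy'
        · exact absurd hyz.symm hxy
        · exact hy'
      exact List.mem_append.2 (Or.inl (List.mem_map.2 ⟨y, hy', rfl⟩))
    · rcases List.mem_cons.1 hy with hyz | hy'
      · subst hyz
        refine List.mem_append.2 (Or.inl (List.mem_map.2 ⟨x, hx', ?_⟩))
        exact Sym2.eq_swap
      · exact List.mem_append.2 (Or.inr (ih x y hx' hy' hxy))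

/-! ### getD helpers -/

lemma getD_mem {l : List ℕ} {n : ℕ} (h : n < l.length) (d : ℕ) : l.getD n d ∈ l := by
  rw [List.getD_eq_getElem l d h]
  exact List.getElem_mem h

lemma getDs_mem {l : List (Sym2 ℕ)} {n : ℕ} (h : n < l.length) (d : Sym2 ℕ) : l.getD n d ∈ l := by
  rw [List.getD_eq_getElem l d h]
  exact List.getElem_mem h

lemma getD_take {α : Type*} (l : List α) (s i : ℕ) (d : α) (h : i < s) :
    (l.take s).getD i d = l.getD i d := by
  rcases lt_or_ge i l.length with hi | hi
  · rw [List.getD_eq_getElem l d hi, List.getD_eq_getElem _ d (by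
      rw [List.length_take]; omega)]
    simp [List.getElem_take]
  · rw [List.getD_eq_default _ _ hi, List.getD_eq_default]
    rw [List.length_take]; omega

lemma getD_drop {α : Type*} (l : List α) (s t : ℕ) (d : α) :
    (l.drop s).getD t d = l.getD (s + t) d := by
  rcases lt_or_ge (s + t) l.length with hi | hi
  · rw [List.getD_eq_getElem l d hi, List.getD_eq_getElem _ d (by
      rw [List.length_drop]; omega)]
    rw [List.getElem_drop]
  · rw [List.getD_eq_default _ _ hi, List.getD_eq_default]
    rw [List.length_drop]; omega

lemma getD_nodup_inj {l : List ℕ} (hl : l.Nodup) {i j : ℕ} (hi : i < l.length)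
    (hj : j < l.length) (d : ℕ) (h : l.getD i d = l.getD j d) : i = j := by
  rw [List.getD_eq_getElem l d hi, List.getD_eq_getElem l d hj] at h
  exact List.Nodup.getElem_inj_iff hl |>.1 h

lemma getDs_nodup_inj {l : List (Sym2 ℕ)} (hl : l.Nodup) {i j : ℕ} (hi : i < l.length)
    (hj : j < l.length) (d : Sym2 ℕ) (h : l.getD i d = l.getD j d) : i = j := by
  rw [List.getD_eq_getElem l d hi, List.getD_eq_getElem l d hj] at h
  exact List.Nodup.getElem_inj_iff hl |>.1 h


noncomputable def fg (m0 n0 : ℕ) : ℕ → ℕ → ℕ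
  | a, b =>
    if a ≤ m0 ∨ b ≤ n0 then ramsey a b
    else fg m0 n0 (a - 1) b + fg m0 n0 a (b - 1)
  termination_by a b => a + b
  decreasing_by all_goals omega

noncomputable def Nbf (m0 n0 : ℕ) : ℕ → ℕ → ℕ
  | a, b =>
    if a ≤ m0 ∨ b ≤ n0 then ramsey a b * ramsey a b
    else (fg m0 n0 a b - 1) + max (Nbf m0 n0 (a - 1) b) (Nbf m0 n0 a (b - 1))
  termination_by a b => a + b
  decreasing_by all_goals omega

lemma fg_boundary {m0 n0 a b : ℕ} (h : a ≤ m0 ∨ b ≤ n0) :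
    fg m0 n0 a b = ramsey a b := by rw [fg, if_pos h]

lemma fg_interior {m0 n0 a b : ℕ} (h : ¬ (a ≤ m0 ∨ b ≤ n0)) :
    fg m0 n0 a b = fg m0 n0 (a - 1) b + fg m0 n0 a (b - 1) := by rw [fg, if_neg h]

lemma Nbf_boundary {m0 n0 a b : ℕ} (h : a ≤ m0 ∨ b ≤ n0) :
    Nbf m0 n0 a b = ramsey a b * ramsey a b := by rw [Nbf, if_pos h]

lemma Nbf_interior {m0 n0 a b : ℕ} (h : ¬ (a ≤ m0 ∨ b ≤ n0)) :
    Nbf m0 n0 a b = (fg m0 n0 a b - 1) + max (Nbf m0 n0 (a - 1) b) (Nbf m0 n0 a (b - 1)) := by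
  rw [Nbf, if_neg h]

lemma fg_pos {m0 n0 : ℕ} (hm0 : 1 ≤ m0) :
    ∀ k a b, a + b ≤ k → 1 ≤ a → 1 ≤ b → 1 ≤ fg m0 n0 a b := by
  intro k
  induction k with
  | zero => intro a b h ha hb; omega
  | succ k ih =>
    intro a b h ha hb
    by_cases hbd : a ≤ m0 ∨ b ≤ n0
    · rw [fg_boundary hbd]; exact ramsey_pos a b ha hb
    · rw [fg_interior hbd]
      have h1 : 1 ≤ fg m0 n0 (a - 1) b := ih (a - 1) b (by omega) (by omega) hb
      omega

def Mono (B : List Bool → Sym2 ℕ) (ρ : List Bool) (F : Finset ℕ) (N k : ℕ) (c : Bool) : Prop :=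
  ∃ S : Finset ℕ, S ⊆ F ∧ S.card = k ∧
    ∀ u ∈ S, ∀ v ∈ S, u ≠ v → ∃ t, t < N ∧ B (ρ.take t) = s(u, v) ∧ ρ.getD t false = c

theorem stratLemma (m0 n0 : ℕ) (hm0 : 1 ≤ m0) (hn0 : 1 ≤ n0) :
    ∀ K a b, a + b ≤ K → m0 ≤ a → n0 ≤ b → ∀ F : Finset ℕ, ∀ M : ℕ,
      fg m0 n0 a b ≤ F.card → (∀ x ∈ F, x < M) →
      ∃ B : List Bool → Sym2 ℕ,
        (∀ h, ¬ (B h).IsDiag) ∧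
        (∀ h : List Bool, ∀ x, x ∈ B h → x ∈ F ∨ M ≤ x) ∧
        (∀ h : List Bool, ∀ i, i < h.length → B (h.take i) ≠ B h) ∧
        (∀ ρ : List Bool, Nbf m0 n0 a b ≤ ρ.length →
          Mono B ρ F (Nbf m0 n0 a b) a true ∨ Mono B ρ F (Nbf m0 n0 a b) b false) := by
  intro K
  induction K with
  | zero => intro a b hK ha hb; omega
  | succ K IH =>
    intro a b hK ha hb F M hcard hFM
    by_cases hbd : a ≤ m0 ∨ b ≤ n0
    · -- ===== boundary: complete graph on a subset of size `ramsey a b` =====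
      rw [fg_boundary hbd] at hcard
      have hNb : Nbf m0 n0 a b = ramsey a b * ramsey a b := Nbf_boundary hbd
      obtain ⟨F₀, hF₀sub, hF₀card⟩ := Finset.exists_subset_card_eq hcard
      set l := F₀.sort (· ≤ ·) with hldef
      have hlnd : l.Nodup := F₀.sort_nodup _
      have hlen : l.length = ramsey a b := by rw [hldef, Finset.length_sort, hF₀card]
      have hmeml : ∀ x, x ∈ l ↔ x ∈ F₀ := fun x => Finset.mem_sort _
      set ps := allPairs l with hpsdef
      have hpsnd : ps.Nodup := allPairs_nodup l hlnd
      have hpslen : ps.length ≤ ramsey a b * ramsey a b := by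
        have h := allPairs_length l
        rw [hlen] at h
        exact h
      have hend : ∀ e ∈ ps, ∀ z ∈ e, z ∈ F₀ := fun e he z hz =>
        (hmeml z).1 (allPairs_endpoints l e he z hz)
      have hendM : ∀ e ∈ ps, ∀ z ∈ e, z < M := fun e he z hz => hFM z (hF₀sub (hend e he z hz))
      have hdiag : ∀ e ∈ ps, ¬ e.IsDiag := allPairs_not_isDiag l hlnd
      obtain ⟨B, hB1, hB2⟩ :
          ∃ B : List Bool → Sym2 ℕ,
            (∀ h : List Bool, h.length < ps.length → B h = ps.getD h.length s(0, 0)) ∧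
            (∀ h : List Bool, ¬ h.length < ps.length →
              B h = s(M + 2 * (h.length - ps.length), M + 2 * (h.length - ps.length) + 1)) :=
        ⟨fun h => if hh : h.length < ps.length then ps.getD h.length s(0, 0)
          else s(M + 2 * (h.length - ps.length), M + 2 * (h.length - ps.length) + 1),
          fun h hh => dif_pos hh, fun h hh => dif_neg hh⟩
      refine ⟨B, ?_, ?_, ?_, ?_⟩
      · intro h
        by_cases hh : h.length < ps.length
        · rw [hB1 h hh]; exact hdiag _ (getDs_mem hh _)
        · rw [hB2 h hh, Sym2.mk_isDiag_iff]; omega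
      · intro h x hx
        by_cases hh : h.length < ps.length
        · rw [hB1 h hh] at hx
          exact Or.inl (hF₀sub (hend _ (getDs_mem hh _) x hx))
        · rw [hB2 h hh] at hx
          rcases Sym2.mem_iff.1 hx with rfl | rfl
          · exact Or.inr (by omega)
          · exact Or.inr (by omega)
      · intro h i hi
        have hti : (h.take i).length = i := by rw [List.length_take]; omega
        by_cases hh : h.length < ps.length
        · have hii : i < ps.length := by omega
          rw [hB1 _ (by rw [hti]; omega), hB1 h hh, hti]
          intro heq
          exact absurd (getDs_nodup_inj hpsnd hii hh _ heq) (by omega)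
        · by_cases hii : i < ps.length
          · rw [hB1 _ (by rw [hti]; exact hii), hB2 h hh, hti]
            intro heq
            have hmm : (M + 2 * (h.length - ps.length)) ∈ ps.getD i s(0, 0) := by
              rw [heq]; exact Sym2.mem_mk_left _ _
            have := hendM _ (getDs_mem hii _) _ hmm
            omega
          · rw [hB2 _ (by rw [hti]; exact hii), hB2 h hh, hti]
            intro heq
            rcases Sym2.eq_iff.1 heq with ⟨h1, -⟩ | ⟨h1, h2⟩ <;> omega
      · intro ρ hρ
        rw [hNb] at hρ
        rw [hNb]
        set χ : Sym2 ℕ → Bool := fun e => ρ.getD (ps.idxOf e) false with hχ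
        have key : ∀ (S : Finset ℕ) (c : Bool), S ⊆ F₀ →
            (∀ u ∈ S, ∀ v ∈ S, u ≠ v → χ s(u, v) = c) →
            ∀ u ∈ S, ∀ v ∈ S, u ≠ v → ∃ t, t < ramsey a b * ramsey a b ∧
              B (ρ.take t) = s(u, v) ∧ ρ.getD t false = c := by
          intro S c hsub hpair u hu v hv huv
          have hmem : s(u, v) ∈ ps :=
            allPairs_complete l u v ((hmeml u).2 (hsub hu)) ((hmeml v).2 (hsub hv)) huv
          have ht : ps.idxOf s(u, v) < ps.length := List.idxOf_lt_length_iff.2 hmem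
          refine ⟨ps.idxOf s(u, v), by omega, ?_, ?_⟩
          · rw [hB1 _ (by rw [List.length_take]; omega)]
            rw [List.length_take, min_eq_left (by omega : ps.idxOf s(u, v) ≤ ρ.length)]
            rw [List.getD_eq_getElem _ _ ht]
            exact List.getElem_idxOf ht
          · exact hpair u hu v hv huv
        rcases ramseyF F₀ hF₀card χ with ⟨S, hsub, hcardS, hpair⟩ | ⟨S, hsub, hcardS, hpair⟩
        · exact Or.inl ⟨S, hsub.trans hF₀sub, hcardS, key S true hsub hpair⟩
        · exact Or.inr ⟨S, hsub.trans hF₀sub, hcardS, key S false hsub hpair⟩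
    · -- ===== interior: star at `v`, then recurse =====
      have hfg := fg_interior hbd
      have hNb := Nbf_interior hbd
      have hf1 : 1 ≤ fg m0 n0 (a - 1) b := fg_pos hm0 (a - 1 + b) (a - 1) b le_rfl (by omega) (by omega)
      have hf2 : 1 ≤ fg m0 n0 a (b - 1) := fg_pos hm0 (a + (b - 1)) a (b - 1) le_rfl (by omega) (by omega)
      set s := fg m0 n0 a b - 1 with hsdef
      have hs : s + 1 = fg m0 n0 (a - 1) b + fg m0 n0 a (b - 1) := by
        rw [hsdef, hfg]; omega
      have hFcard : s + 1 ≤ F.card := by omega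
      have hFne : F.Nonempty := Finset.card_pos.1 (by omega)
      set v := F.min' hFne with hvdef
      have hvF : v ∈ F := F.min'_mem hFne
      have hvM : v < M := hFM v hvF
      set rest := ((F.erase v).sort (· ≤ ·)).take s with hrestdef
      have hrestlen : rest.length = s := by
        rw [hrestdef, List.length_take, Finset.length_sort, Finset.card_erase_of_mem hvF]
        omega
      have hrestnd : rest.Nodup :=
        ((Finset.sort_nodup _ _).sublist (List.take_sublist _ _))
      have hrestmem : ∀ i, i < s → rest.getD i 0 ∈ F.erase v := by
        intro i hi
        have hmem : rest.getD i 0 ∈ rest := getD_mem (by omega) 0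
        have hmem2 := List.take_subset s _ (hrestdef ▸ hmem)
        exact (Finset.mem_sort _).1 hmem2
      have hrestF : ∀ i, i < s → rest.getD i 0 ∈ F := fun i hi =>
        Finset.mem_of_mem_erase (hrestmem i hi)
      have hrestM : ∀ i, i < s → rest.getD i 0 < M := fun i hi => hFM _ (hrestF i hi)
      have hrestv : ∀ i, i < s → rest.getD i 0 ≠ v := fun i hi =>
        (Finset.mem_erase.1 (hrestmem i hi)).1
      set RS : List Bool → Finset ℕ := fun σ =>
        ((Finset.range s).filter fun i => σ.getD i false = true).image fun i => rest.getD i 0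
        with hRSdef
      set BS : List Bool → Finset ℕ := fun σ =>
        ((Finset.range s).filter fun i => ¬ (σ.getD i false = true)).image fun i => rest.getD i 0
        with hBSdef
      have hmemRS : ∀ σ u, u ∈ RS σ → ∃ i, i < s ∧ σ.getD i false = true ∧ rest.getD i 0 = u := by
        intro σ u hu
        rw [hRSdef] at hu
        simp only [Finset.mem_image, Finset.mem_filter, Finset.mem_range] at hu
        obtain ⟨i, ⟨hi, hci⟩, hrei⟩ := hu
        exact ⟨i, hi, hci, hrei⟩
      have hmemBS : ∀ σ u, u ∈ BS σ → ∃ i, i < s ∧ σ.getD i false = false ∧ rest.getD i 0 = u := by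
        intro σ u hu
        rw [hBSdef] at hu
        simp only [Finset.mem_image, Finset.mem_filter, Finset.mem_range] at hu
        obtain ⟨i, ⟨hi, hci⟩, hrei⟩ := hu
        refine ⟨i, hi, ?_, hrei⟩
        cases hcd : σ.getD i false
        · rfl
        · exact absurd hcd hci
      have hRSsub : ∀ σ, RS σ ⊆ F.erase v := by
        intro σ u hu
        obtain ⟨i, hi, -, hrei⟩ := hmemRS σ u hu
        exact hrei ▸ hrestmem i hi
      have hBSsub : ∀ σ, BS σ ⊆ F.erase v := by
        intro σ u hu
        obtain ⟨i, hi, -, hrei⟩ := hmemBS σ u hu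
        exact hrei ▸ hrestmem i hi
      have hRScard : ∀ σ, (RS σ).card + (BS σ).card = s := by
        intro σ
        have hinj : ∀ (p : ℕ → Prop) (inst : DecidablePred p),
            Set.InjOn (fun i => rest.getD i 0) ↑(@Finset.filter ℕ p inst (Finset.range s)) := by
          intro p inst x hx y hy hxy
          have hx' : x < s := Finset.mem_range.1 (Finset.mem_filter.1 (Finset.mem_coe.1 hx)).1
          have hy' : y < s := Finset.mem_range.1 (Finset.mem_filter.1 (Finset.mem_coe.1 hy)).1
          exact getD_nodup_inj hrestnd (by omega) (by omega) 0 hxy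
        have h1 : (RS σ).card = ((Finset.range s).filter fun i => σ.getD i false = true).card :=
          Finset.card_image_of_injOn (hinj _ _)
        have h2 : (BS σ).card = ((Finset.range s).filter fun i => ¬ σ.getD i false = true).card :=
          Finset.card_image_of_injOn (hinj _ _)
        rw [h1, h2, Finset.card_filter_add_card_filter_not, Finset.card_range]
      choose Bf h1 h2 h3 h4 using IH
      have hK1 : (a - 1) + b ≤ K := by omega
      have hK2 : a + (b - 1) ≤ K := by omega
      have ha1 : m0 ≤ a - 1 := by omega
      have hb1 : n0 ≤ b - 1 := by omega
      obtain ⟨I2, hI2R, hI2B⟩ :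
          ∃ I2 : Finset ℕ → Finset ℕ → List Bool → Sym2 ℕ,
            (∀ R Bl (hsub : R ⊆ F.erase v) (hc : fg m0 n0 (a - 1) b ≤ R.card), I2 R Bl =
              Bf (a - 1) b hK1 ha1 hb R M hc
                (fun x hx => hFM x (Finset.mem_of_mem_erase (hsub hx)))) ∧
            (∀ R Bl (hsub : Bl ⊆ F.erase v)
              (hR : ¬ (fg m0 n0 (a - 1) b ≤ R.card ∧ R ⊆ F.erase v))
              (hc : fg m0 n0 a (b - 1) ≤ Bl.card), I2 R Bl =
              Bf a (b - 1) hK2 ha hb1 Bl M hc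
                (fun x hx => hFM x (Finset.mem_of_mem_erase (hsub hx)))) := by
        refine ⟨fun R Bl =>
          if h : fg m0 n0 (a - 1) b ≤ R.card ∧ R ⊆ F.erase v then
            Bf (a - 1) b hK1 ha1 hb R M h.1
              (fun x hx => hFM x (Finset.mem_of_mem_erase (h.2 hx)))
          else if h' : fg m0 n0 a (b - 1) ≤ Bl.card ∧ Bl ⊆ F.erase v then
            Bf a (b - 1) hK2 ha hb1 Bl M h'.1
              (fun x hx => hFM x (Finset.mem_of_mem_erase (h'.2 hx)))
          else fun _ => s(0, 0), ?_, ?_⟩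
        · intro R Bl hsub hc
          dsimp only
          rw [dif_pos ⟨hc, hsub⟩]
        · intro R Bl hsub hR hc
          dsimp only
          rw [dif_neg hR, dif_pos ⟨hc, hsub⟩]
      have hBSc : ∀ σ : List Bool, ¬ fg m0 n0 (a - 1) b ≤ (RS σ).card →
          fg m0 n0 a (b - 1) ≤ (BS σ).card := by
        intro σ hR
        have := hRScard σ
        omega
      obtain ⟨B, hBhi, hBlo⟩ :
          ∃ B : List Bool → Sym2 ℕ,
            (∀ h : List Bool, h.length < s → B h = s(v, rest.getD h.length 0)) ∧
            (∀ h : List Bool, ¬ h.length < s →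
              B h = I2 (RS (h.take s)) (BS (h.take s)) (h.drop s)) :=
        ⟨fun h => if hh : h.length < s then s(v, rest.getD h.length 0)
          else I2 (RS (h.take s)) (BS (h.take s)) (h.drop s),
          fun h hh => dif_pos hh, fun h hh => dif_neg hh⟩
      have hIval : ∀ σ : List Bool,
          (∀ g, ¬ (I2 (RS σ) (BS σ) g).IsDiag) ∧
          (∀ g x, x ∈ I2 (RS σ) (BS σ) g → x ∈ F.erase v ∨ M ≤ x) ∧
          (∀ g : List Bool, ∀ i, i < g.length →
            I2 (RS σ) (BS σ) (g.take i) ≠ I2 (RS σ) (BS σ) g) := by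
        intro σ
        by_cases hR : fg m0 n0 (a - 1) b ≤ (RS σ).card
        · rw [hI2R (RS σ) (BS σ) (hRSsub σ) hR]
          refine ⟨h1 _ _ _ _ _ _ _ _ _, ?_, h3 _ _ _ _ _ _ _ _ _⟩
          intro g x hx
          rcases h2 _ _ _ _ _ _ _ _ _ g x hx with h | h
          · exact Or.inl (hRSsub σ h)
          · exact Or.inr h
        · rw [hI2B (RS σ) (BS σ) (hBSsub σ) (fun hco => hR hco.1) (hBSc σ hR)]
          refine ⟨h1 _ _ _ _ _ _ _ _ _, ?_, h3 _ _ _ _ _ _ _ _ _⟩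
          intro g x hx
          rcases h2 _ _ _ _ _ _ _ _ _ g x hx with h | h
          · exact Or.inl (hBSsub σ h)
          · exact Or.inr h
      refine ⟨B, ?_, ?_, ?_, ?_⟩
      · -- nondiag
        intro h
        by_cases hh : h.length < s
        · rw [hBhi h hh, Sym2.mk_isDiag_iff]
          exact fun heq => hrestv _ hh heq.symm
        · rw [hBlo h hh]
          exact (hIval _).1 _
      · -- dom
        intro h x hx
        by_cases hh : h.length < s
        · rw [hBhi h hh] at hx
          rcases Sym2.mem_iff.1 hx with rfl | rfl
          · exact Or.inl hvF
          · exact Or.inl (hrestF _ hh)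
        · rw [hBlo h hh] at hx
          rcases (hIval _).2.1 _ x hx with h' | h'
          · exact Or.inl (Finset.mem_of_mem_erase h')
          · exact Or.inr h'
      · -- dist
        intro h i hi
        have hti : (h.take i).length = i := by rw [List.length_take]; omega
        by_cases hh : h.length < s
        · have hii : i < s := by omega
          rw [hBhi _ (by rw [hti]; omega), hBhi h hh, hti]
          intro heq
          rcases Sym2.eq_iff.1 heq with ⟨-, h2⟩ | ⟨h1, -⟩
          · exact absurd (getD_nodup_inj hrestnd (by omega) (by omega) 0 h2) (by omega)
          · exact hrestv h.length hh h1.symm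
        · by_cases hii : i < s
          · rw [hBhi _ (by rw [hti]; exact hii), hBlo h hh, hti]
            intro heq
            have hvmem : v ∈ I2 (RS (h.take s)) (BS (h.take s)) (h.drop s) := by
              rw [← heq]; exact Sym2.mem_mk_left _ _
            rcases (hIval _).2.1 _ v hvmem with h' | h'
            · exact (Finset.mem_erase.1 h').1 rfl
            · omega
          · rw [hBlo _ (by rw [hti]; exact hii), hBlo h hh]
            have e1 : (h.take i).take s = h.take s := by
              rw [List.take_take, min_eq_left (by omega : s ≤ i)]
            have e2 : (h.take i).drop s = (h.drop s).take (i - s) := by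
              rw [List.drop_take]
            rw [e1, e2]
            exact (hIval _).2.2 (h.drop s) (i - s) (by rw [List.length_drop]; omega)
      · -- win
        intro ρ hρ
        have hmax1 : Nbf m0 n0 (a - 1) b ≤ max (Nbf m0 n0 (a - 1) b) (Nbf m0 n0 a (b - 1)) :=
          le_max_left _ _
        have hmax2 : Nbf m0 n0 a (b - 1) ≤ max (Nbf m0 n0 (a - 1) b) (Nbf m0 n0 a (b - 1)) :=
          le_max_right _ _
        have hρlen : s + max (Nbf m0 n0 (a - 1) b) (Nbf m0 n0 a (b - 1)) ≤ ρ.length := by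
          rw [hNb] at hρ; omega
        set σ := ρ.take s with hσdef
        have hσget : ∀ i, i < s → σ.getD i false = ρ.getD i false := fun i hi =>
          getD_take ρ s i false hi
        have hstar : ∀ i, i < s → B (ρ.take i) = s(v, rest.getD i 0) := by
          intro i hi
          have hl : (ρ.take i).length = i := by rw [List.length_take]; omega
          rw [hBhi _ (by rw [hl]; exact hi), hl]
        have hBt : ∀ t', t' < max (Nbf m0 n0 (a - 1) b) (Nbf m0 n0 a (b - 1)) →
            B (ρ.take (s + t')) = I2 (RS σ) (BS σ) ((ρ.drop s).take t') := by
          intro t' ht'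
          have hlen2 : (ρ.take (s + t')).length = s + t' := by rw [List.length_take]; omega
          rw [hBlo _ (by rw [hlen2]; omega)]
          have e1 : (ρ.take (s + t')).take s = σ := by
            rw [hσdef, List.take_take, min_eq_left (by omega : s ≤ s + t')]
          have e2 : (ρ.take (s + t')).drop s = (ρ.drop s).take t' := by
            rw [List.drop_take, Nat.add_sub_cancel_left]
          rw [e1, e2]
        by_cases hR : fg m0 n0 (a - 1) b ≤ (RS σ).card
        · -- red branch
          have hIeq := hI2R (RS σ) (BS σ) (hRSsub σ) hR
          have hwin := h4 (a - 1) b hK1 ha1 hb (RS σ) M hR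
            (fun x hx => hFM x (Finset.mem_of_mem_erase (hRSsub σ hx))) (ρ.drop s)
            (by rw [List.length_drop]; omega)
          rcases hwin with ⟨S, hSsub, hScard, hSpair⟩ | ⟨S, hSsub, hScard, hSpair⟩
          · left
            have hvS : v ∉ S := fun hmem =>
              (Finset.mem_erase.1 (hRSsub σ (hSsub hmem))).1 rfl
            refine ⟨insert v S, ?_, ?_, ?_⟩
            · intro x hx
              rcases Finset.mem_insert.1 hx with rfl | hx
              · exact hvF
              · exact Finset.mem_of_mem_erase (hRSsub σ (hSsub hx))
            · rw [Finset.card_insert_of_notMem hvS, hScard]; omega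
            · intro x hx y hy hxy
              rcases Finset.mem_insert.1 hx with rfl | hx <;>
                rcases Finset.mem_insert.1 hy with rfl | hy
              · exact absurd rfl hxy
              · obtain ⟨i, hi, hci, hrei⟩ := hmemRS σ y (hSsub hy)
                refine ⟨i, by rw [hNb]; omega, ?_, ?_⟩
                · rw [hstar i hi, hrei]
                · rw [← hσget i hi]; exact hci
              · obtain ⟨i, hi, hci, hrei⟩ := hmemRS σ x (hSsub hx)
                refine ⟨i, by rw [hNb]; omega, ?_, ?_⟩
                · rw [hstar i hi, hrei]; exact Sym2.eq_swap
                · rw [← hσget i hi]; exact hci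
              · obtain ⟨t', ht', hBe, hce⟩ := hSpair x hx y hy hxy
                refine ⟨s + t', by rw [hNb]; omega, ?_, ?_⟩
                · rw [hBt t' (by omega), hIeq]; exact hBe
                · rw [← getD_drop ρ s t' false]; exact hce
          · right
            refine ⟨S, fun x hx => Finset.mem_of_mem_erase (hRSsub σ (hSsub hx)), hScard, ?_⟩
            intro x hx y hy hxy
            obtain ⟨t', ht', hBe, hce⟩ := hSpair x hx y hy hxy
            refine ⟨s + t', by rw [hNb]; omega, ?_, ?_⟩
            · rw [hBt t' (by omega), hIeq]; exact hBe
            · rw [← getD_drop ρ s t' false]; exact hce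
        · -- blue branch
          have hIeq := hI2B (RS σ) (BS σ) (hBSsub σ) (fun hco => hR hco.1) (hBSc σ hR)
          have hwin := h4 a (b - 1) hK2 ha hb1 (BS σ) M (hBSc σ hR)
            (fun x hx => hFM x (Finset.mem_of_mem_erase (hBSsub σ hx))) (ρ.drop s)
            (by rw [List.length_drop]; omega)
          rcases hwin with ⟨S, hSsub, hScard, hSpair⟩ | ⟨S, hSsub, hScard, hSpair⟩
          · left
            refine ⟨S, fun x hx => Finset.mem_of_mem_erase (hBSsub σ (hSsub hx)), hScard, ?_⟩
            intro x hx y hy hxy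
            obtain ⟨t', ht', hBe, hce⟩ := hSpair x hx y hy hxy
            refine ⟨s + t', by rw [hNb]; omega, ?_, ?_⟩
            · rw [hBt t' (by omega), hIeq]; exact hBe
            · rw [← getD_drop ρ s t' false]; exact hce
          · right
            have hvS : v ∉ S := fun hmem =>
              (Finset.mem_erase.1 (hBSsub σ (hSsub hmem))).1 rfl
            refine ⟨insert v S, ?_, ?_, ?_⟩
            · intro x hx
              rcases Finset.mem_insert.1 hx with rfl | hx
              · exact hvF
              · exact Finset.mem_of_mem_erase (hBSsub σ (hSsub hx))
            · rw [Finset.card_insert_of_notMem hvS, hScard]; omega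
            · intro x hx y hy hxy
              rcases Finset.mem_insert.1 hx with rfl | hx <;>
                rcases Finset.mem_insert.1 hy with rfl | hy
              · exact absurd rfl hxy
              · obtain ⟨i, hi, hci, hrei⟩ := hmemBS σ y (hSsub hy)
                refine ⟨i, by rw [hNb]; omega, ?_, ?_⟩
                · rw [hstar i hi, hrei]
                · rw [← hσget i hi]; exact hci
              · obtain ⟨i, hi, hci, hrei⟩ := hmemBS σ x (hSsub hx)
                refine ⟨i, by rw [hNb]; omega, ?_, ?_⟩
                · rw [hstar i hi, hrei]; exact Sym2.eq_swap
                · rw [← hσget i hi]; exact hci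
              · obtain ⟨t', ht', hBe, hce⟩ := hSpair x hx y hy hxy
                refine ⟨s + t', by rw [hNb]; omega, ?_, ?_⟩
                · rw [hBt t' (by omega), hIeq]; exact hBe
                · rw [← getD_drop ρ s t' false]; exact hce


/-! ### arithmetic helpers -/

lemma ES_bound {a b : ℕ} (ha : 1 ≤ a) (hb : 1 ≤ b) :
    ramsey a b ≤ (a + b - 2).choose (a - 1) := by
  have h := ramsey_le_choose (a - 1) (b - 1)
  rw [show a - 1 + 1 = a from by omega, show b - 1 + 1 = b from by omega,
    show (a - 1) + (b - 1) = a + b - 2 from by omega] at h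
  exact h

lemma choose_mono_left (c : ℕ) : ∀ a a' : ℕ, a ≤ a' → (a + c).choose a ≤ (a' + c).choose a' := by
  intro a a' h
  induction a', h using Nat.le_induction with
  | base => exact le_rfl
  | succ x hx ih =>
    refine le_trans ih ?_
    have h2 : (x + 1 + c).choose (x + 1) = (x + c).choose x + (x + c).choose (x + 1) := by
      rw [show x + 1 + c = (x + c) + 1 from by omega]
      exact Nat.choose_succ_succ (x + c) x
    omega

lemma pow_le_fact_choose (n p : ℕ) (hn : 1 ≤ n) :
    n ^ p ≤ p.factorial * (n + p - 1).choose p := by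
  have h1 : n ^ p ≤ n.ascFactorial p := Nat.pow_succ_le_ascFactorial n p
  have h2 : n.ascFactorial p = p.factorial * ((n - 1) + p).choose p := by
    have := Nat.ascFactorial_eq_factorial_mul_choose (n - 1) p
    rw [show n - 1 + 1 = n from by omega] at this
    exact this
  rw [show n + p - 1 = (n - 1) + p from by omega]
  exact le_trans h1 (le_of_eq h2)

lemma keyA {m n : ℕ} (hm : 3 ≤ m) (hn : m ≤ n) :
    ((m / 2 + 1) + n - 2).choose ((m / 2 + 1) - 1) * ((m / 2 + 1) + n - 2).choose ((m / 2 + 1) - 1)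
      ≤ (4 * m ^ 2) ^ m * m.factorial * (n * ((m + n - 2).choose (m - 1))) := by
  set q := m / 2 with hq
  have hq1 : 1 ≤ q := by omega
  have e1 : (m / 2 + 1) + n - 2 = n + q - 1 := by omega
  have e2 : (m / 2 + 1) - 1 = q := by omega
  rw [e1, e2]
  set A := (n + q - 1).choose q with hA
  have st1 : A ≤ (2 * n) ^ q :=
    le_trans (Nat.choose_le_pow _ _) (Nat.pow_le_pow_left (by omega) q)
  have st2 : A * A ≤ (2 * n) ^ (2 * q) := by
    calc A * A ≤ (2 * n) ^ q * (2 * n) ^ q := Nat.mul_le_mul st1 st1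
    _ = (2 * n) ^ (2 * q) := by rw [← pow_add]; ring_nf
  have st3 : (2 * n) ^ (2 * q) ≤ (2 * n) ^ m :=
    Nat.pow_le_pow_right (by omega) (by omega)
  have st4 : (2 * n) ^ m = 2 ^ m * (n * n ^ (m - 1)) := by
    rw [mul_pow]
    congr 1
    rw [← pow_succ']
    congr 1
    omega
  have st5 : n ^ (m - 1) ≤ (m - 1).factorial * (m + n - 2).choose (m - 1) := by
    have := pow_le_fact_choose n (m - 1) (by omega)
    rw [show n + (m - 1) - 1 = m + n - 2 from by omega] at this
    exact this
  have st6 : 2 ^ m ≤ (4 * m ^ 2) ^ m := Nat.pow_le_pow_left (by nlinarith) m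
  have st7 : (m - 1).factorial ≤ m.factorial := Nat.factorial_le (by omega)
  calc A * A ≤ 2 ^ m * (n * n ^ (m - 1)) := le_trans st2 (le_trans st3 (le_of_eq st4))
    _ ≤ (4 * m ^ 2) ^ m * (n * ((m - 1).factorial * (m + n - 2).choose (m - 1))) := by
        refine Nat.mul_le_mul st6 (Nat.mul_le_mul_left n st5)
    _ ≤ (4 * m ^ 2) ^ m * (n * (m.factorial * (m + n - 2).choose (m - 1))) := by
        refine Nat.mul_le_mul_left _ (Nat.mul_le_mul_left n (Nat.mul_le_mul_right _ st7))
    _ = (4 * m ^ 2) ^ m * m.factorial * (n * ((m + n - 2).choose (m - 1))) := by ring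

lemma keyB {m n : ℕ} (hm : 3 ≤ m) (hn : m ≤ n) :
    (m + Nat.sqrt n - 2).choose (m - 1) * (m + Nat.sqrt n - 2).choose (m - 1)
      ≤ (4 * m ^ 2) ^ m * m.factorial * (n * ((m + n - 2).choose (m - 1))) := by
  set n0 := Nat.sqrt n with hn0
  have hn0sq : n0 * n0 ≤ n := by
    have := Nat.sqrt_le' n
    rw [pow_two] at this
    exact this
  have hn0n : n0 ≤ n := Nat.sqrt_le_self n
  set A := (m + n0 - 2).choose (m - 1) with hA
  have st1 : A ≤ (n0 + m) ^ (m - 1) :=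
    le_trans (Nat.choose_le_pow _ _) (Nat.pow_le_pow_left (by omega) _)
  have sq : (n0 + m) ^ 2 ≤ 4 * m ^ 2 * n := by
    have h1 : n0 * n0 ≤ m * m * n := le_trans hn0sq (Nat.le_mul_of_pos_left n (by positivity))
    have h2 : n0 * m ≤ m * m * n := by
      calc n0 * m ≤ n * m := Nat.mul_le_mul_right m hn0n
      _ = m * n := by ring
      _ ≤ m * m * n := Nat.mul_le_mul_right n (Nat.le_mul_of_pos_right m (by omega))
    have h3 : m * m ≤ m * m * n := Nat.le_mul_of_pos_right _ (by omega)
    have e1 : (n0 + m) ^ 2 = n0 * n0 + 2 * (n0 * m) + m * m := by ring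
    have e2 : 4 * m ^ 2 * n = 4 * (m * m * n) := by ring
    omega
  have st2 : A * A ≤ (4 * m ^ 2 * n) ^ (m - 1) := by
    calc A * A ≤ (n0 + m) ^ (m - 1) * (n0 + m) ^ (m - 1) := Nat.mul_le_mul st1 st1
    _ = ((n0 + m) ^ 2) ^ (m - 1) := by rw [← pow_add, ← pow_mul]; ring_nf
    _ ≤ (4 * m ^ 2 * n) ^ (m - 1) := Nat.pow_le_pow_left sq _
  have st3 : (4 * m ^ 2 * n) ^ (m - 1) = (4 * m ^ 2) ^ (m - 1) * n ^ (m - 1) := mul_pow _ _ _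
  have st5 : n ^ (m - 1) ≤ (m - 1).factorial * (m + n - 2).choose (m - 1) := by
    have := pow_le_fact_choose n (m - 1) (by omega)
    rw [show n + (m - 1) - 1 = m + n - 2 from by omega] at this
    exact this
  have st6 : (4 * m ^ 2) ^ (m - 1) ≤ (4 * m ^ 2) ^ m :=
    Nat.pow_le_pow_right (by positivity) (by omega)
  have st7 : (m - 1).factorial ≤ m.factorial := Nat.factorial_le (by omega)
  calc A * A ≤ (4 * m ^ 2) ^ (m - 1) * n ^ (m - 1) := le_trans st2 (le_of_eq st3)
    _ ≤ (4 * m ^ 2) ^ m * ((m - 1).factorial * (m + n - 2).choose (m - 1)) :=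
        Nat.mul_le_mul st6 st5
    _ ≤ (4 * m ^ 2) ^ m * (m.factorial * (m + n - 2).choose (m - 1)) :=
        Nat.mul_le_mul_left _ (Nat.mul_le_mul_right _ st7)
    _ ≤ (4 * m ^ 2) ^ m * m.factorial * (n * ((m + n - 2).choose (m - 1))) := by
        have h1 : 1 ≤ n := by omega
        calc (4 * m ^ 2) ^ m * (m.factorial * (m + n - 2).choose (m - 1))
            = (4 * m ^ 2) ^ m * m.factorial * (1 * ((m + n - 2).choose (m - 1))) := by ring
          _ ≤ (4 * m ^ 2) ^ m * m.factorial * (n * ((m + n - 2).choose (m - 1))) := by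
              exact Nat.mul_le_mul_left _ (Nat.mul_le_mul_right _ h1)


/-! ### histOf lemmas -/

lemma histOf_length (P : List Bool → Bool) : ∀ N, (histOf P N).length = N := by
  intro N
  induction N with
  | zero => rfl
  | succ N ih => simp [histOf, ih]

lemma histOf_take (P : List Bool → Bool) : ∀ N t, t ≤ N → (histOf P N).take t = histOf P t := by
  intro N
  induction N with
  | zero =>
    intro t ht
    obtain rfl : t = 0 := by omega
    rfl
  | succ N ih =>
    intro t ht
    rcases Nat.lt_or_ge t (N + 1) with h | h
    · show (histOf P N ++ [P (histOf P N)]).take t = _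
      rw [List.take_append_of_le_length (by rw [histOf_length]; omega)]
      exact ih t (by omega)
    · obtain rfl : t = N + 1 := by omega
      exact List.take_of_length_le (by rw [histOf_length])

lemma histOf_getD (P : List Bool → Bool) (N t : ℕ) (h : t < N) :
    (histOf P N).getD t false = P (histOf P t) := by
  have h1 : (histOf P N).take (t + 1) = histOf P (t + 1) := histOf_take P N (t + 1) (by omega)
  have h2 : ((histOf P N).take (t + 1)).getD t false = (histOf P N).getD t false :=
    getD_take _ (t + 1) t false (by omega)
  rw [← h2, h1]
  show (histOf P t ++ [P (histOf P t)]).getD t false = _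
  rw [List.getD_append_right _ _ _ _ (by rw [histOf_length])]
  rw [histOf_length]
  simp


theorem stmt14 (m : ℕ) (hm : 3 ≤ m) :
    ∃ Cm : ℝ, 0 < Cm ∧ ∀ n : ℕ, m ≤ n → ∀ L : ℝ, 0 < L →
      (∀ m' n' : ℕ, m / 2 + 1 ≤ m' → m' ≤ m → Nat.sqrt n ≤ n' → n' ≤ n →
        (ramsey (m / 2 + 1) n' : ℝ) ≤
            (1 / L) * (((m / 2 + 1) + n' - 2).choose ((m / 2 + 1) - 1) : ℝ) ∧
          (ramsey m' (Nat.sqrt n) : ℝ) ≤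
            (1 / L) * ((m' + Nat.sqrt n - 2).choose (m' - 1) : ℝ)) →
      (onlineRamsey m n : ℝ) ≤ Cm * (n : ℝ) / L * ((m + n - 2).choose (m - 1) : ℝ) := by
  refine ⟨(((4 * m ^ 2) ^ m * m.factorial : ℕ) : ℝ) + 2, by positivity, ?_⟩
  intro n hn L hL H
  set m0 := m / 2 + 1 with hm0def
  set n0 := Nat.sqrt n with hn0def
  have hm0a : 1 ≤ m0 := by omega
  have hn0a : 1 ≤ n0 := by rw [hn0def]; exact Nat.sqrt_pos.2 (by omega)
  have hm0m : m0 ≤ m := by omega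
  have hn0n : n0 ≤ n := by rw [hn0def]; exact Nat.sqrt_le_self n
  have hm02 : 2 ≤ m0 := by omega
  have hinvL : (0:ℝ) ≤ 1 / L := by positivity
  -- grid bound on fg
  have grid1 : ∀ k a b, a + b ≤ k → m0 ≤ a → a ≤ m → n0 ≤ b → b ≤ n →
      (fg m0 n0 a b : ℝ) ≤ 1 / L * (((a + b - 2).choose (a - 1) : ℕ) : ℝ) := by
    intro k
    induction k with
    | zero => intro a b h h1 _ _ _; exact absurd h (by omega)
    | succ k ih =>
      intro a b hk ha1 ha2 hb1 hb2
      by_cases hbd : a ≤ m0 ∨ b ≤ n0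
      · rw [fg_boundary hbd]
        rcases hbd with hA | hB
        · obtain rfl : a = m0 := le_antisymm hA ha1
          exact (H m b (by omega) le_rfl hb1 hb2).1
        · obtain rfl : b = n0 := le_antisymm hB hb1
          exact (H a n (by omega) ha2 hn0n le_rfl).2
      · rw [fg_interior hbd]
        have ha3 : 3 ≤ a := by omega
        have hb2' : 2 ≤ b := by omega
        have ih1 := ih (a - 1) b (by omega) (by omega) (by omega) hb1 hb2
        have ih2 := ih a (b - 1) (by omega) ha1 ha2 (by omega) (by omega)
        have hpas : ((a - 1) + b - 2).choose ((a - 1) - 1) + (a + (b - 1) - 2).choose (a - 1)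
            = (a + b - 2).choose (a - 1) := by
          rw [show (a - 1) + b - 2 = a + b - 3 from by omega,
            show (a - 1) - 1 = a - 2 from by omega,
            show a + (b - 1) - 2 = a + b - 3 from by omega,
            show a + b - 2 = (a + b - 3) + 1 from by omega,
            show a - 1 = (a - 2) + 1 from by omega]
          exact (Nat.choose_succ_succ _ _).symm
        rw [← hpas]
        push_cast
        push_cast at ih1 ih2
        linarith
  set Cn : ℕ := (4 * m ^ 2) ^ m * m.factorial * (n * ((m + n - 2).choose (m - 1))) with hCndef
  have monoC : ∀ a b : ℕ, m0 ≤ a → a ≤ m → n0 ≤ b → b ≤ n →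
      ((a + b - 2).choose (a - 1)) ≤ (m + n - 2).choose (m - 1) := by
    intro a b h1 h2 h3 h4
    have s1 : (a + b - 2).choose (a - 1) ≤ (m + b - 2).choose (m - 1) := by
      have h := choose_mono_left (b - 1) (a - 1) (m - 1) (by omega)
      rw [show (a - 1) + (b - 1) = a + b - 2 from by omega,
        show (m - 1) + (b - 1) = m + b - 2 from by omega] at h
      exact h
    have s2 : (m + b - 2).choose (m - 1) ≤ (m + n - 2).choose (m - 1) :=
      Nat.choose_le_choose _ (by omega)
    omega
  have gridN : ∀ k a b, a + b ≤ k → m0 ≤ a → a ≤ m → n0 ≤ b → b ≤ n →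
      (Nbf m0 n0 a b : ℝ) ≤ ((a : ℝ) + b) * (1 / L * (((m + n - 2).choose (m - 1) : ℕ) : ℝ))
        + 1 / L * (Cn : ℝ) := by
    intro k
    induction k with
    | zero => intro a b h h1 _ _ _; exact absurd h (by omega)
    | succ k ih =>
      intro a b hk ha1 ha2 hb1 hb2
      by_cases hbd : a ≤ m0 ∨ b ≤ n0
      · rw [Nbf_boundary hbd]
        have hfirst : (0:ℝ) ≤ ((a : ℝ) + b) * (1 / L * (((m + n - 2).choose (m - 1) : ℕ) : ℝ)) := by
          positivity
        have main : ((ramsey a b : ℕ) : ℝ) * ((ramsey a b : ℕ) : ℝ) ≤ 1 / L * (Cn : ℝ) := by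
          rcases hbd with hA | hB
          · obtain rfl : a = m0 := le_antisymm hA ha1
            have h1 := (H m b (by omega) le_rfl hb1 hb2).1
            have h2 : ramsey m0 b ≤ (m0 + b - 2).choose (m0 - 1) := ES_bound (by omega) (by omega)
            have h3 : (m0 + b - 2).choose (m0 - 1) ≤ (m0 + n - 2).choose (m0 - 1) :=
              Nat.choose_le_choose _ (by omega)
            have h4 : (m0 + n - 2).choose (m0 - 1) * ((m0 + n - 2).choose (m0 - 1)) ≤ Cn := by
              rw [hCndef, hm0def]
              exact keyA hm hn
            calc ((ramsey m0 b : ℕ) : ℝ) * ((ramsey m0 b : ℕ) : ℝ)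
                ≤ (1 / L * (((m0 + b - 2).choose (m0 - 1) : ℕ) : ℝ))
                  * (((m0 + b - 2).choose (m0 - 1) : ℕ) : ℝ) := by
                  refine mul_le_mul h1 (Nat.cast_le.2 h2) (by positivity) ?_
                  positivity
              _ = 1 / L * ((((m0 + b - 2).choose (m0 - 1)
                  * ((m0 + b - 2).choose (m0 - 1)) : ℕ)) : ℝ) := by push_cast; ring
              _ ≤ 1 / L * (Cn : ℝ) := by
                  refine mul_le_mul_of_nonneg_left (Nat.cast_le.2 ?_) hinvL
                  exact le_trans (Nat.mul_le_mul h3 h3) h4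
          · obtain rfl : b = n0 := le_antisymm hB hb1
            have h1 := (H a n (by omega) ha2 hn0n le_rfl).2
            have h2 : ramsey a n0 ≤ (a + n0 - 2).choose (a - 1) := ES_bound (by omega) (by omega)
            have h3 : (a + n0 - 2).choose (a - 1) ≤ (m + n0 - 2).choose (m - 1) := by
              have h := choose_mono_left (n0 - 1) (a - 1) (m - 1) (by omega)
              rw [show (a - 1) + (n0 - 1) = a + n0 - 2 from by omega,
                show (m - 1) + (n0 - 1) = m + n0 - 2 from by omega] at h
              exact h
            have h4 : (m + n0 - 2).choose (m - 1) * ((m + n0 - 2).choose (m - 1)) ≤ Cn := by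
              rw [hCndef, hn0def]
              exact keyB hm hn
            calc ((ramsey a n0 : ℕ) : ℝ) * ((ramsey a n0 : ℕ) : ℝ)
                ≤ (1 / L * (((a + n0 - 2).choose (a - 1) : ℕ) : ℝ))
                  * (((a + n0 - 2).choose (a - 1) : ℕ) : ℝ) := by
                  refine mul_le_mul h1 (Nat.cast_le.2 h2) (by positivity) ?_
                  positivity
              _ = 1 / L * ((((a + n0 - 2).choose (a - 1)
                  * ((a + n0 - 2).choose (a - 1)) : ℕ)) : ℝ) := by push_cast; ring
              _ ≤ 1 / L * (Cn : ℝ) := by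
                  refine mul_le_mul_of_nonneg_left (Nat.cast_le.2 ?_) hinvL
                  exact le_trans (Nat.mul_le_mul h3 h3) h4
        push_cast
        push_cast at main
        linarith
      · have hle : Nbf m0 n0 a b ≤ fg m0 n0 a b
            + max (Nbf m0 n0 (a - 1) b) (Nbf m0 n0 a (b - 1)) := by
          rw [Nbf_interior hbd]; omega
        have hfg1 : (fg m0 n0 a b : ℝ) ≤ 1 / L * (((m + n - 2).choose (m - 1) : ℕ) : ℝ) := by
          refine le_trans (grid1 (a + b) a b le_rfl ha1 ha2 hb1 hb2) ?_
          exact mul_le_mul_of_nonneg_left (Nat.cast_le.2 (monoC a b ha1 ha2 hb1 hb2)) hinvL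
        have ih1 := ih (a - 1) b (by omega) (by omega) (by omega) hb1 hb2
        have ih2 := ih a (b - 1) (by omega) ha1 ha2 (by omega) (by omega)
        have hca : ((a - 1 : ℕ) : ℝ) = (a : ℝ) - 1 := by
          rw [Nat.cast_sub (by omega : 1 ≤ a)]
          simp
        have hcb : ((b - 1 : ℕ) : ℝ) = (b : ℝ) - 1 := by
          rw [Nat.cast_sub (by omega : 1 ≤ b)]
          simp
        have hmax : max ((Nbf m0 n0 (a - 1) b : ℕ) : ℝ) ((Nbf m0 n0 a (b - 1) : ℕ) : ℝ)
            ≤ ((a : ℝ) + b - 1) * (1 / L * (((m + n - 2).choose (m - 1) : ℕ) : ℝ))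
              + 1 / L * (Cn : ℝ) := by
          refine max_le (le_trans ih1 ?_) (le_trans ih2 ?_)
          · rw [hca]
            exact le_of_eq (by ring)
          · rw [hcb]
            exact le_of_eq (by ring)
        have hle' : (Nbf m0 n0 a b : ℝ) ≤ (fg m0 n0 a b : ℝ)
            + max ((Nbf m0 n0 (a - 1) b : ℕ) : ℝ) ((Nbf m0 n0 a (b - 1) : ℕ) : ℝ) := by
          have h := (Nat.cast_le (α := ℝ)).2 hle
          push_cast at h
          exact h
        calc (Nbf m0 n0 a b : ℝ) ≤ _ := hle'
          _ ≤ 1 / L * (((m + n - 2).choose (m - 1) : ℕ) : ℝ)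
              + (((a : ℝ) + b - 1) * (1 / L * (((m + n - 2).choose (m - 1) : ℕ) : ℝ))
              + 1 / L * (Cn : ℝ)) := add_le_add hfg1 hmax
          _ = ((a : ℝ) + b) * (1 / L * (((m + n - 2).choose (m - 1) : ℕ) : ℝ))
              + 1 / L * (Cn : ℝ) := by ring
  -- Builder wins
  have hwin : BuilderWins m n (Nbf m0 n0 m n) := by
    obtain ⟨B, hnd, hdom, hdist, hw⟩ := stratLemma m0 n0 hm0a hn0a (m + n) m n le_rfl hm0m hn0n
      (Finset.range (fg m0 n0 m n)) (fg m0 n0 m n) (by rw [Finset.card_range])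
      (fun x hx => Finset.mem_range.1 hx)
    refine ⟨B, ⟨hnd, hdist⟩, ?_⟩
    intro P
    have hw2 := hw (histOf P (Nbf m0 n0 m n)) (by rw [histOf_length])
    rcases hw2 with ⟨S, -, hcard, hpair⟩ | ⟨S, -, hcard, hpair⟩
    · left
      refine ⟨S, hcard, ?_⟩
      intro u hu w hww huw
      obtain ⟨t, ht, hB, hc⟩ := hpair u hu w hww huw
      refine ⟨t, ht, ?_, ?_⟩
      · show B (histOf P t) = s(u, w)
        rw [← histOf_take P (Nbf m0 n0 m n) t (by omega)]
        exact hB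
      · show P (histOf P t) = true
        rw [← histOf_getD P (Nbf m0 n0 m n) t ht]
        exact hc
    · right
      refine ⟨S, hcard, ?_⟩
      intro u hu w hww huw
      obtain ⟨t, ht, hB, hc⟩ := hpair u hu w hww huw
      refine ⟨t, ht, ?_, ?_⟩
      · show B (histOf P t) = s(u, w)
        rw [← histOf_take P (Nbf m0 n0 m n) t (by omega)]
        exact hB
      · show P (histOf P t) = false
        rw [← histOf_getD P (Nbf m0 n0 m n) t ht]
        exact hc
  have hOR : onlineRamsey m n ≤ Nbf m0 n0 m n := Nat.sInf_le hwin
  have hcast : (onlineRamsey m n : ℝ) ≤ (Nbf m0 n0 m n : ℝ) := Nat.cast_le.2 hOR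
  have hNreal := gridN (m + n) m n le_rfl hm0m le_rfl hn0n le_rfl
  have hmn : (m : ℝ) + n ≤ 2 * n := by
    have h := (Nat.cast_le (α := ℝ)).2 hn
    linarith
  have hB0 : (0:ℝ) ≤ (((m + n - 2).choose (m - 1) : ℕ) : ℝ) := by positivity
  have hCncast : (Cn : ℝ) = (((4 * m ^ 2) ^ m * m.factorial : ℕ) : ℝ)
      * ((n : ℝ) * (((m + n - 2).choose (m - 1) : ℕ) : ℝ)) := by
    rw [hCndef]
    push_cast
    ring
  have key : ((m : ℝ) + n) * (1 / L * (((m + n - 2).choose (m - 1) : ℕ) : ℝ))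
      + 1 / L * (Cn : ℝ)
      ≤ ((((4 * m ^ 2) ^ m * m.factorial : ℕ) : ℝ) + 2) * n / L
        * (((m + n - 2).choose (m - 1) : ℕ) : ℝ) := by
    rw [hCncast]
    have h2n : ((m : ℝ) + n) * (1 / L * (((m + n - 2).choose (m - 1) : ℕ) : ℝ))
        ≤ 2 * n * (1 / L * (((m + n - 2).choose (m - 1) : ℕ) : ℝ)) :=
      mul_le_mul_of_nonneg_right hmn (by positivity)
    have e : ((((4 * m ^ 2) ^ m * m.factorial : ℕ) : ℝ) + 2) * n / L
        * (((m + n - 2).choose (m - 1) : ℕ) : ℝ)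
        = 2 * n * (1 / L * (((m + n - 2).choose (m - 1) : ℕ) : ℝ))
          + 1 / L * ((((4 * m ^ 2) ^ m * m.factorial : ℕ) : ℝ)
            * ((n : ℝ) * (((m + n - 2).choose (m - 1) : ℕ) : ℝ))) := by
      field_simp
      ring
    rw [e]
    linarith
  exact le_trans hcast (le_trans hNreal key)


end OnlineRamseyGame
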